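/- arXiv:1909.13400 — 2 statements merged into one kernel-verified Lean document; each statement's English description precedes it below -/
import Mathlib

section
/- Let f : ℝ^p → ℝ be μ-strongly convex and L-smooth with global minimizer x⋆, and let the steplength α satisfy 0 < α ≤ 2/(μ+L). Then for every x ∈ ℝ^p, one exact gradient step contracts the distance to the minimizer: ‖x − α∇f(x) − x⋆‖² ≤ (1 − 2αγ)‖x − x⋆‖², where γ = μL/(μ+L). -/
/-! The function `g = f - μ/2 ‖·‖²` is convex, and the descent lemma for `f` gives `g` the upper
quadratic bound with constant `L - μ`. A convex function with such a bound has a cocoercive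
gradient (Baillon–Haddad), which for `g` reads
`‖∇f x - ∇f y‖² + μL ‖x - y‖² ≤ (μ + L) ⟪∇f x - ∇f y, x - y⟫`. At `y = x⋆` the gradient vanishes,
and expanding `‖x - x⋆ - α ∇f x‖²` with `α (μ + L) ≤ 2` gives the contraction. -/

/-- `f` is `μ`-strongly convex: `x ↦ f x - (μ/2)‖x‖²` is convex on all of `ℝ^p`. -/
def StronglyConvex {p : ℕ} (μ : ℝ) (f : EuclideanSpace ℝ (Fin p) → ℝ) : Prop :=
  ConvexOn ℝ Set.univ (fun x => f x - μ / 2 * ‖x‖ ^ 2)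

/-- `f` is `L`-smooth: `f` is differentiable and its gradient is `L`-Lipschitz. -/
def LSmooth {p : ℕ} (L : ℝ) (f : EuclideanSpace ℝ (Fin p) → ℝ) : Prop :=
  Differentiable ℝ f ∧ ∀ x y, ‖gradient f x - gradient f y‖ ≤ L * ‖x - y‖

open RealInnerProductSpace Set

section SmoothConvex

variable {F : Type*} [NormedAddCommGroup F] [InnerProductSpace ℝ F] [CompleteSpace F]
  {f : F → ℝ} {μ L K : ℝ}

theorem hasDerivAt_comp_add_smul (hf : Differentiable ℝ f) (x d : F) (t : ℝ) :
    HasDerivAt (fun s : ℝ => f (x + s • d)) ⟪gradient f (x + t • d), d⟫ t :=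
  (hf _).hasGradientAt.hasFDerivAt.comp_hasDerivAt t
    (by simpa using ((hasDerivAt_id t).smul_const d).const_add x)

theorem HasGradientAt.sub_mul_norm_sq {f' x : F} (hf : HasGradientAt f f' x) (μ : ℝ) :
    HasGradientAt (fun z => f z - μ / 2 * ‖z‖ ^ 2) (f' - μ • x) x := by
  rw [hasGradientAt_iff_hasFDerivAt] at hf ⊢
  refine (hf.sub ((hasStrictFDerivAt_norm_sq x).hasFDerivAt.const_mul (μ / 2))).congr_fderiv ?_
  ext v
  simp
  ring

theorem ConvexOn.add_inner_gradient_le (hconv : ConvexOn ℝ univ f) (hf : Differentiable ℝ f)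
    (x y : F) : f x + ⟪gradient f x, y - x⟫ ≤ f y := by
  have hline : ConvexOn ℝ univ (fun t : ℝ => f (x + t • (y - x))) := by
    simpa [Function.comp_def, AffineMap.lineMap_apply, add_comm]
      using hconv.comp_affineMap (AffineMap.lineMap x y : ℝ →ᵃ[ℝ] F)
  have hslope := hline.le_slope_of_hasDerivAt (mem_univ 0) (mem_univ 1) zero_lt_one
    (by simpa only [zero_smul, add_zero] using
      hasDerivAt_comp_add_smul hf x (y - x) 0)
  simp only [slope_def_field, zero_smul, add_zero, one_smul, add_sub_cancel, sub_zero,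
    div_one] at hslope
  linarith

theorem ConvexOn.inner_gradient_sub_nonneg (hconv : ConvexOn ℝ univ f) (hf : Differentiable ℝ f)
    (x y : F) : 0 ≤ ⟪gradient f x - gradient f y, x - y⟫ := by
  have hx := hconv.add_inner_gradient_le hf x y
  have hy := hconv.add_inner_gradient_le hf y x
  rw [← neg_sub x y, inner_neg_right] at hx
  rw [inner_sub_left]
  linarith

theorem inner_gradient_add_smul_sub_le
    (hL : ∀ a b, ‖gradient f a - gradient f b‖ ≤ L * ‖a - b‖) (x d : F) {t : ℝ} (ht : 0 ≤ t) :
    ⟪gradient f (x + t • d) - gradient f x, d⟫ ≤ t * (L * ‖d‖ ^ 2) :=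
  calc ⟪gradient f (x + t • d) - gradient f x, d⟫
      ≤ ‖gradient f (x + t • d) - gradient f x‖ * ‖d‖ := real_inner_le_norm _ _
    _ ≤ L * ‖t • d‖ * ‖d‖ := by
        gcongr
        simpa using hL (x + t • d) x
    _ = t * (L * ‖d‖ ^ 2) := by
        rw [norm_smul, Real.norm_of_nonneg ht]
        ring

theorem le_add_inner_gradient_add_sq (hf : Differentiable ℝ f)
    (hL : ∀ a b, ‖gradient f a - gradient f b‖ ≤ L * ‖a - b‖) (x y : F) :
    f y ≤ f x + ⟪gradient f x, y - x⟫ + L / 2 * ‖y - x‖ ^ 2 := by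
  set d := y - x
  set ψ : ℝ → ℝ := fun t =>
    f (x + t • d) - t * ⟪gradient f x, d⟫ - t ^ 2 * (L / 2 * ‖d‖ ^ 2)
  have hψ : ∀ t, HasDerivAt ψ (⟪gradient f (x + t • d), d⟫ - ⟪gradient f x, d⟫
      - 2 * t * (L / 2 * ‖d‖ ^ 2)) t := by
    intro t
    refine ((hasDerivAt_comp_add_smul hf x d t).sub ?_).sub ?_
    · simpa using (hasDerivAt_id t).mul_const ⟪gradient f x, d⟫
    · simpa using (hasDerivAt_pow 2 t).mul_const (L / 2 * ‖d‖ ^ 2)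
  have hdiff : Differentiable ℝ ψ := fun t => (hψ t).differentiableAt
  have hanti : AntitoneOn ψ (Icc 0 1) := by
    refine antitoneOn_of_deriv_nonpos (convex_Icc 0 1) hdiff.continuous.continuousOn
      hdiff.differentiableOn fun t ht => ?_
    rw [interior_Icc] at ht
    have := inner_gradient_add_smul_sub_le hL x d ht.1.le
    rw [inner_sub_left] at this
    rw [(hψ t).deriv]
    linarith
  have h01 := hanti (left_mem_Icc.2 zero_le_one) (right_mem_Icc.2 zero_le_one) zero_le_one
  have hψ0 : ψ 0 = f x := by simp [ψ]
  have hψ1 : ψ 1 = f y - ⟪gradient f x, y - x⟫ - L / 2 * ‖y - x‖ ^ 2 := by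
    simp only [ψ, d, one_smul, add_sub_cancel, one_mul, one_pow]
  linarith

theorem ConvexOn.add_inner_gradient_add_sq_le (hconv : ConvexOn ℝ univ f)
    (hf : Differentiable ℝ f)
    (hdesc : ∀ a b, f b ≤ f a + ⟪gradient f a, b - a⟫ + K / 2 * ‖b - a‖ ^ 2)
    (x y : F) (s : ℝ) :
    f x + ⟪gradient f x, y - x⟫ + (s - K / 2 * s ^ 2) * ‖gradient f y - gradient f x‖ ^ 2
      ≤ f y := by
  set G := gradient f y - gradient f x
  -- `z` is a gradient step from `y`: the tangent plane at `x` lies below `f z`, the quadratic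
  -- model at `y` above it.
  set z := y - s • G
  have hlower := hconv.add_inner_gradient_le hf x z
  have hupper := hdesc y z
  have hzx : ⟪gradient f x, z - x⟫ = ⟪gradient f x, y - x⟫ - s * ⟪gradient f x, G⟫ := by
    rw [show z - x = (y - x) - s • G by simp only [z]; abel, inner_sub_right,
      real_inner_smul_right]
  have hzy : ⟪gradient f y, z - y⟫ = -(s * ⟪gradient f y, G⟫) := by
    rw [show z - y = -(s • G) by simp only [z]; abel, inner_neg_right, real_inner_smul_right]
  have hnorm : ‖z - y‖ ^ 2 = s ^ 2 * ‖G‖ ^ 2 := by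
    rw [show z - y = -(s • G) by simp only [z]; abel, norm_neg, norm_smul, mul_pow,
      Real.norm_eq_abs, sq_abs]
  have hG : ⟪gradient f y, G⟫ - ⟪gradient f x, G⟫ = ‖G‖ ^ 2 := by
    rw [← inner_sub_left, real_inner_self_eq_norm_sq]
  rw [hzx] at hlower
  rw [hzy, hnorm] at hupper
  linear_combination hlower + hupper - s * hG

theorem le_mul_of_forall_two_mul_sub_mul_sq_le {N w : ℝ} (hK : 0 ≤ K)
    (h : ∀ s : ℝ, (2 * s - K * s ^ 2) * N ≤ w) : N ≤ K * w := by
  rcases hK.lt_or_eq with hK | rfl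
  · have h' := h K⁻¹
    rw [show (2 * K⁻¹ - K * K⁻¹ ^ 2) * N = N / K by field_simp; ring] at h'
    exact (div_le_iff₀' hK).1 h'
  · by_contra! hN
    rw [zero_mul] at hN
    have h' := h ((w + 1) / (2 * N))
    rw [zero_mul, sub_zero, show 2 * ((w + 1) / (2 * N)) * N = w + 1 by field_simp] at h'
    linarith

theorem ConvexOn.norm_gradient_sub_sq_le (hconv : ConvexOn ℝ univ f) (hf : Differentiable ℝ f)
    (hK : 0 ≤ K)
    (hdesc : ∀ a b, f b ≤ f a + ⟪gradient f a, b - a⟫ + K / 2 * ‖b - a‖ ^ 2) (x y : F) :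
    ‖gradient f x - gradient f y‖ ^ 2 ≤ K * ⟪gradient f x - gradient f y, x - y⟫ := by
  refine le_mul_of_forall_two_mul_sub_mul_sq_le hK fun s => ?_
  have hxy := hconv.add_inner_gradient_add_sq_le hf hdesc x y s
  have hyx := hconv.add_inner_gradient_add_sq_le hf hdesc y x s
  rw [norm_sub_rev, ← neg_sub x y, inner_neg_right] at hxy
  rw [inner_sub_left]
  linarith

theorem Differentiable.gradient_sub_mul_norm_sq (hf : Differentiable ℝ f) (μ : ℝ) :
    gradient (fun z => f z - μ / 2 * ‖z‖ ^ 2) = fun z => gradient f z - μ • z :=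
  gradient_eq fun z => (hf z).hasGradientAt.sub_mul_norm_sq μ

theorem Differentiable.sub_mul_norm_sq (hf : Differentiable ℝ f) (μ : ℝ) :
    Differentiable ℝ (fun z => f z - μ / 2 * ‖z‖ ^ 2) :=
  fun z => ((hf z).hasGradientAt.sub_mul_norm_sq μ).differentiableAt

theorem le_add_inner_gradient_add_sq_sub_mul_norm_sq (hf : Differentiable ℝ f)
    (hL : ∀ a b, ‖gradient f a - gradient f b‖ ≤ L * ‖a - b‖) (μ : ℝ) (x y : F) :
    f y - μ / 2 * ‖y‖ ^ 2 ≤ f x - μ / 2 * ‖x‖ ^ 2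
      + ⟪gradient (fun z => f z - μ / 2 * ‖z‖ ^ 2) x, y - x⟫
      + (L - μ) / 2 * ‖y - x‖ ^ 2 := by
  have hdesc := le_add_inner_gradient_add_sq hf hL x y
  have hsq : ‖y‖ ^ 2 = ‖x‖ ^ 2 + 2 * ⟪x, y - x⟫ + ‖y - x‖ ^ 2 := by
    simpa using norm_add_sq_real x (y - x)
  rw [hf.gradient_sub_mul_norm_sq, inner_sub_left, real_inner_smul_left]
  linear_combination hdesc - μ / 2 * hsq

theorem ConvexOn.mul_norm_sq_le_inner_gradient_sub
    (hconv : ConvexOn ℝ univ (fun z => f z - μ / 2 * ‖z‖ ^ 2)) (hf : Differentiable ℝ f)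
    (x y : F) : μ * ‖x - y‖ ^ 2 ≤ ⟪gradient f x - gradient f y, x - y⟫ := by
  have h := hconv.inner_gradient_sub_nonneg (hf.sub_mul_norm_sq μ) x y
  rw [hf.gradient_sub_mul_norm_sq, sub_sub_sub_comm, ← smul_sub, inner_sub_left,
    real_inner_smul_left, real_inner_self_eq_norm_sq] at h
  linarith

theorem inner_gradient_sub_ge_of_convexOn_sub_mul_norm_sq
    (hconv : ConvexOn ℝ univ (fun z => f z - μ / 2 * ‖z‖ ^ 2)) (hf : Differentiable ℝ f)
    (hL : ∀ a b, ‖gradient f a - gradient f b‖ ≤ L * ‖a - b‖) (x y : F) :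
    ‖gradient f x - gradient f y‖ ^ 2 + μ * L * ‖x - y‖ ^ 2
      ≤ (μ + L) * ⟪gradient f x - gradient f y, x - y⟫ := by
  rcases eq_or_ne x y with rfl | hxy
  · simp
  have hμL : μ ≤ L := by
    have hd : 0 < ‖x - y‖ ^ 2 := pow_pos (norm_pos_iff.2 (sub_ne_zero.2 hxy)) 2
    refine le_of_mul_le_mul_right ?_ hd
    calc μ * ‖x - y‖ ^ 2 ≤ ⟪gradient f x - gradient f y, x - y⟫ :=
          hconv.mul_norm_sq_le_inner_gradient_sub hf x y
      _ ≤ ‖gradient f x - gradient f y‖ * ‖x - y‖ := real_inner_le_norm _ _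
      _ ≤ L * ‖x - y‖ * ‖x - y‖ := by gcongr; exact hL x y
      _ = L * ‖x - y‖ ^ 2 := by ring
  have h := hconv.norm_gradient_sub_sq_le (hf.sub_mul_norm_sq μ) (sub_nonneg.2 hμL)
    (le_add_inner_gradient_add_sq_sub_mul_norm_sq hf hL μ) x y
  rw [hf.gradient_sub_mul_norm_sq, sub_sub_sub_comm, ← smul_sub] at h
  generalize gradient f x - gradient f y = G at h ⊢
  generalize x - y = d at h ⊢
  rw [norm_sub_sq_real, inner_sub_left, real_inner_smul_right, real_inner_smul_left,
    real_inner_self_eq_norm_sq, norm_smul, mul_pow, Real.norm_eq_abs, sq_abs] at h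
  linear_combination h

end SmoothConvex

theorem norm_sub_smul_sq_le_of_add_le_inner {F : Type*} [NormedAddCommGroup F]
    [InnerProductSpace ℝ F] {u d : F} {μ L α : ℝ}
    (h : ‖u‖ ^ 2 + μ * L * ‖d‖ ^ 2 ≤ (μ + L) * ⟪u, d⟫) (hα0 : 0 < α) (hα : α ≤ 2 / (μ + L)) :
    ‖d - α • u‖ ^ 2 ≤ (1 - 2 * α * (μ * L / (μ + L))) * ‖d‖ ^ 2 := by
  have hμL : 0 < μ + L := by
    by_contra! hμL
    linarith [div_nonpos_of_nonneg_of_nonpos zero_le_two hμL]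
  have hα2 : α * (μ + L) ≤ 2 := (le_div_iff₀ hμL).1 hα
  rw [norm_sub_sq_real, real_inner_smul_right, norm_smul, mul_pow, Real.norm_eq_abs, sq_abs,
    real_inner_comm]
  have hgap : (μ + L) * ((1 - 2 * α * (μ * L / (μ + L))) * ‖d‖ ^ 2
      - (‖d‖ ^ 2 - 2 * (α * ⟪u, d⟫) + α ^ 2 * ‖u‖ ^ 2))
      = 2 * α * ((μ + L) * ⟪u, d⟫ - ‖u‖ ^ 2 - μ * L * ‖d‖ ^ 2)
        + α * (2 - α * (μ + L)) * ‖u‖ ^ 2 := by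
    field_simp
    ring
  have hnonneg : 0 ≤ (μ + L) * ((1 - 2 * α * (μ * L / (μ + L))) * ‖d‖ ^ 2
      - (‖d‖ ^ 2 - 2 * (α * ⟪u, d⟫) + α ^ 2 * ‖u‖ ^ 2)) := by
    rw [hgap]
    have : 0 ≤ 2 - α * (μ + L) := by linarith
    have : 0 ≤ (μ + L) * ⟪u, d⟫ - ‖u‖ ^ 2 - μ * L * ‖d‖ ^ 2 := by linarith
    positivity
  exact sub_nonneg.1 ((mul_nonneg_iff_of_pos_left hμL).1 hnonneg)

theorem gradient_step_contraction_general {p : ℕ} (μ L : ℝ)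
    (f : EuclideanSpace ℝ (Fin p) → ℝ)
    (hsc : StronglyConvex μ f) (hsm : LSmooth L f)
    (xstar : EuclideanSpace ℝ (Fin p)) (hmin : ∀ x, f xstar ≤ f x)
    (α : ℝ) (hα0 : 0 < α) (hα : α ≤ 2 / (μ + L))
    (x : EuclideanSpace ℝ (Fin p)) :
    ‖x - α • gradient f x - xstar‖ ^ 2 ≤
      (1 - 2 * α * (μ * L / (μ + L))) * ‖x - xstar‖ ^ 2 := by
  obtain ⟨hf, hL⟩ := hsm
  have hstar : gradient f xstar = 0 := by
    simp [gradient, IsLocalMin.fderiv_eq_zero (Filter.Eventually.of_forall hmin)]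
  have h := inner_gradient_sub_ge_of_convexOn_sub_mul_norm_sq hsc hf hL x xstar
  rw [hstar, sub_zero] at h
  rw [sub_right_comm]
  exact norm_sub_smul_sq_le_of_add_le_inner h hα0 hα

/-- One exact gradient step with steplength `0 < α ≤ 2/(μ+L)` contracts the squared
distance to the minimizer by the factor `1 − 2αγ`, `γ = μL/(μ+L)`. -/
theorem gradient_step_contraction {p : ℕ} (μ L : ℝ) (hμ : 0 < μ)
    (f : EuclideanSpace ℝ (Fin p) → ℝ)
    (hsc : StronglyConvex μ f) (hsm : LSmooth L f)
    (xstar : EuclideanSpace ℝ (Fin p)) (hmin : ∀ x, f xstar ≤ f x)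
    (α : ℝ) (hα0 : 0 < α) (hα : α ≤ 2 / (μ + L))
    (x : EuclideanSpace ℝ (Fin p)) :
    ‖x - α • gradient f x - xstar‖ ^ 2 ≤
      (1 - 2 * α * (μ * L / (μ + L))) * ‖x - xstar‖ ^ 2 :=
  gradient_step_contraction_general μ L f hsc hsm xstar hmin α hα0 hα x
end

section
/- Let W ∈ ℝ^{n×n} be a doubly stochastic matrix, t ≥ 1 an integer, and β = ‖W − (1/n)1_n1_n^T‖ the ℓ2 operator norm of W minus the averaging matrix. Given y_1, …, y_n ∈ ℝ^p, define x_i = ∑_{j=1}^n (W^t)_{ij} y_j and ȳ = (1/n)∑_{j=1}^n y_j. Then for every i ∈ {1, …, n}, ‖x_i − ȳ‖² ≤ β^{2t} ∑_{j=1}^n ‖y_j‖². -/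
/-- `W` is doubly stochastic: nonnegative entries, all row and column sums equal 1. -/
def IsDoublyStochastic {n : ℕ} (W : Matrix (Fin n) (Fin n) ℝ) : Prop :=
  (∀ i j, 0 ≤ W i j) ∧ (∀ i, ∑ j, W i j = 1) ∧ (∀ j, ∑ i, W i j = 1)

/-- The ℓ2 operator norm of a square real matrix. -/
noncomputable def l2OpNorm {n : ℕ} (A : Matrix (Fin n) (Fin n) ℝ) : ℝ :=
  ‖(Matrix.toEuclideanCLM (𝕜 := ℝ) A :
      EuclideanSpace ℝ (Fin n) →L[ℝ] EuclideanSpace ℝ (Fin n))‖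

/-!
Let `J` be the averaging matrix. Since `W` is doubly stochastic, `W J = J W = J` and `J² = J`,
so `(W - J)^t = W^t - J` for `t ≥ 1`. Hence `x_i - ȳ = ∑_j (W^t - J)_{ij} y_j`, and by
Cauchy–Schwarz `‖x_i - ȳ‖² ≤ ‖row_i (W - J)^t‖² ∑_j ‖y_j‖²`. A row of a matrix is no longer
than its operator norm, and `‖(W - J)^t‖ ≤ ‖W - J‖^t = β^t`.
-/

open Matrix Finset
open scoped Matrix.Norms.L2Operator

lemma norm_sum_smul_sq_le {ι 𝕜 E : Type*} [Fintype ι] [NormedField 𝕜] [SeminormedAddCommGroup E]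
    [NormedSpace 𝕜 E] (c : ι → 𝕜) (y : ι → E) :
    ‖∑ j, c j • y j‖ ^ 2 ≤ (∑ j, ‖c j‖ ^ 2) * ∑ j, ‖y j‖ ^ 2 := by
  have htriangle : ‖∑ j, c j • y j‖ ≤ ∑ j, ‖c j‖ * ‖y j‖ :=
    (norm_sum_le _ _).trans_eq (by simp only [norm_smul])
  calc ‖∑ j, c j • y j‖ ^ 2 ≤ (∑ j, ‖c j‖ * ‖y j‖) ^ 2 := by gcongr
    _ ≤ (∑ j, ‖c j‖ ^ 2) * ∑ j, ‖y j‖ ^ 2 := sum_mul_sq_le_sq_mul_sq _ _ _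

lemma Matrix.sum_norm_sq_row_le_l2_opNorm_sq {𝕜 m n : Type*} [RCLike 𝕜] [Fintype m] [Fintype n]
    [DecidableEq m] [DecidableEq n] (M : Matrix m n 𝕜) (i : m) :
    ∑ j, ‖M i j‖ ^ 2 ≤ ‖M‖ ^ 2 := by
  have hmulVec := l2_opNorm_mulVec Mᴴ (EuclideanSpace.single i 1)
  rw [l2_opNorm_conjTranspose, PiLp.norm_single, norm_one, mul_one] at hmulVec
  have hrow : ∑ j, ‖M i j‖ ^ 2 =
      ‖(EuclideanSpace.equiv n 𝕜).symm (Mᴴ *ᵥ EuclideanSpace.single i 1)‖ ^ 2 := by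
    simp [EuclideanSpace.norm_sq_eq]
  rw [hrow]
  gcongr

section Averaging

variable {n : ℕ}

noncomputable def averagingMatrix (n : ℕ) : Matrix (Fin n) (Fin n) ℝ :=
  of fun _ _ => 1 / n

lemma mul_averagingMatrix {M : Matrix (Fin n) (Fin n) ℝ} (hM : ∀ i, ∑ j, M i j = 1) :
    M * averagingMatrix n = averagingMatrix n := by
  ext i k
  simp [averagingMatrix, mul_apply, ← sum_mul, hM i]

lemma averagingMatrix_mul {M : Matrix (Fin n) (Fin n) ℝ} (hM : ∀ j, ∑ i, M i j = 1) :
    averagingMatrix n * M = averagingMatrix n := by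
  ext i k
  simp [averagingMatrix, mul_apply, ← mul_sum, hM k]

lemma isIdempotentElem_averagingMatrix : IsIdempotentElem (averagingMatrix n) := by
  refine mul_averagingMatrix fun i => ?_
  have : (n : ℝ) ≠ 0 := by have := i.pos; positivity
  simp [averagingMatrix, this]

end Averaging

lemma sub_pow_succ_of_mul_eq_of_mul_eq {R : Type*} [Ring R] {W J : R} (hWJ : W * J = J)
    (hJW : J * W = J) (hJ : IsIdempotentElem J) (k : ℕ) :
    (W - J) ^ (k + 1) = W ^ (k + 1) - J := by
  have hpowJ (k : ℕ) : W ^ k * J = J := by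
    induction k with
    | zero => rw [pow_zero, one_mul]
    | succ k ih => rw [pow_succ, mul_assoc, hWJ, ih]
  induction k with
  | zero => simp
  | succ k ih =>
    rw [pow_succ, ih, sub_mul, mul_sub, mul_sub, hpowJ, hJW, hJ.eq, ← pow_succ]
    abel

theorem consensus_error_bound_general {n p : ℕ}
    (W : Matrix (Fin n) (Fin n) ℝ) (hds : IsDoublyStochastic W)
    (t : ℕ) (ht : 1 ≤ t)
    (β : ℝ) (hβ : β = l2OpNorm (W - Matrix.of fun _ _ => (1 : ℝ) / n))
    (y : Fin n → EuclideanSpace ℝ (Fin p))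
    (x : Fin n → EuclideanSpace ℝ (Fin p))
    (hx : ∀ i, x i = ∑ j, (W ^ t) i j • y j)
    (ybar : EuclideanSpace ℝ (Fin p)) (hybar : ybar = (1 / (n : ℝ)) • ∑ j, y j) :
    ∀ i, ‖x i - ybar‖ ^ 2 ≤ β ^ (2 * t) * ∑ j, ‖y j‖ ^ 2 := by
  intro i
  obtain ⟨-, hrow, hcol⟩ := hds
  obtain ⟨k, rfl⟩ := Nat.exists_eq_add_of_le' ht
  set J := averagingMatrix n
  have hβ : β = ‖W - J‖ := hβ
  have hpow : (W - J) ^ (k + 1) = W ^ (k + 1) - J := sub_pow_succ_of_mul_eq_of_mul_eq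
    (mul_averagingMatrix hrow) (averagingMatrix_mul hcol) isIdempotentElem_averagingMatrix k
  have hdiff : x i - ybar = ∑ j, ((W - J) ^ (k + 1)) i j • y j := by
    rw [hpow, hx, hybar, smul_sum, ← sum_sub_distrib]
    simp [J, averagingMatrix, sub_smul]
  calc ‖x i - ybar‖ ^ 2
      ≤ (∑ j, ‖((W - J) ^ (k + 1)) i j‖ ^ 2) * ∑ j, ‖y j‖ ^ 2 :=
        hdiff ▸ norm_sum_smul_sq_le _ _
    _ ≤ ‖(W - J) ^ (k + 1)‖ ^ 2 * ∑ j, ‖y j‖ ^ 2 := by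
        gcongr; exact sum_norm_sq_row_le_l2_opNorm_sq _ i
    _ ≤ (β ^ (k + 1)) ^ 2 * ∑ j, ‖y j‖ ^ 2 := by
        gcongr; exact hβ ▸ norm_pow_le' _ k.succ_pos
    _ = β ^ (2 * (k + 1)) * ∑ j, ‖y j‖ ^ 2 := by ring

/-- Consensus-error bound for post-consensus iterates of NEAR-DGD^t:
`‖xᵢ − ȳ‖² ≤ β^{2t} ∑ⱼ ‖yⱼ‖²`. -/
theorem consensus_error_bound {n p : ℕ} (hn : 0 < n)
    (W : Matrix (Fin n) (Fin n) ℝ) (hds : IsDoublyStochastic W)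
    (t : ℕ) (ht : 1 ≤ t)
    (β : ℝ) (hβ : β = l2OpNorm (W - Matrix.of fun _ _ => (1 : ℝ) / n))
    (y : Fin n → EuclideanSpace ℝ (Fin p))
    (x : Fin n → EuclideanSpace ℝ (Fin p))
    (hx : ∀ i, x i = ∑ j, (W ^ t) i j • y j)
    (ybar : EuclideanSpace ℝ (Fin p)) (hybar : ybar = (1 / (n : ℝ)) • ∑ j, y j) :
    ∀ i, ‖x i - ybar‖ ^ 2 ≤ β ^ (2 * t) * ∑ j, ‖y j‖ ^ 2 :=
  consensus_error_bound_general W hds t ht β hβ y x hx ybar hybar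
end
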